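/- If R is a commutative weak nil clean ring, then the Jacobson radical J(R) equals the nilradical of R. -/

import Mathlib

/-! In a weak nil clean ring write `x ∈ J(R)` as `±e + n`. Nilpotents lie in `J(R)`, hence so does
the idempotent `e`; but then `1 - e` is an idempotent unit, i.e. `1 - e = 1`, so `e = 0` and `x = n`
is nilpotent. -/

theorem IsIdempotentElem.eq_zero_of_mem_jacobson_bot {R : Type*} [CommRing R] {e : R}
    (he : IsIdempotentElem e) (hJ : e ∈ (⊥ : Ideal R).jacobson) : e = 0 := by
  have hunit : IsUnit (1 - e) := by
    simpa [sub_eq_neg_add] using Ideal.mem_jacobson_bot.mp hJ (-1)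
  simpa using (IsIdempotentElem.iff_eq_one_of_isUnit hunit).mp he.one_sub

/-- For a commutative weak nil clean ring, `J(R) = nilradical R`. -/
theorem jacobson_eq_nilradical_of_weakNilClean {R : Type*} [CommRing R]
    (h : ∀ x : R, ∃ e n : R, IsIdempotentElem e ∧ IsNilpotent n ∧ (x = e + n ∨ x = -e + n)) :
    (⊥ : Ideal R).jacobson = nilradical R := by
  refine le_antisymm (fun x hx => ?_) Ideal.radical_le_jacobson
  obtain ⟨e, n, he, hn, hx_eq⟩ := h x
  have hnJ : n ∈ (⊥ : Ideal R).jacobson := Ideal.radical_le_jacobson (mem_nilradical.mpr hn)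
  have heJ : e ∈ (⊥ : Ideal R).jacobson := by
    rcases hx_eq with rfl | rfl
    · simpa using sub_mem hx hnJ
    · simpa using sub_mem hnJ hx
  have he0 := he.eq_zero_of_mem_jacobson_bot heJ
  rcases hx_eq with rfl | rfl <;> simpa [he0] using mem_nilradical.mpr hn
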